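/- Fix g ∈ ℓ², s₁ ≥ 0, s₂ ≤ 0, α > 0, and let (β_n) be an increasing positive sequence with β_n → ∞. For each n let (u_n, v_n) be the unique minimizer of the decomposition functional I_{β_n}(u,v) := ½|u|_{s₁}² + (α/2)‖u + v − g‖² + (β_n/2)|v|_{s₂}². Then the sequence (u_n, v_n) is bounded in ℓ² × ℓ², and there is a subsequence along which u_n converges weakly in ℓ² to u₀ and v_n converges weakly to 0, where u₀ is the unique minimizer of E(u) := ½|u|_{s₁}² + (α/2)‖u − g‖² over sequences u ∈ ℓ² with |u|_{s₁} < ∞. -/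

import Mathlib

open scoped BigOperators
open Filter

noncomputable section

/-- Index set `ℤ^d \ {0}` of nonzero frequencies. -/
abbrev K (d : ℕ) : Type := {k : Fin d → ℤ // k ≠ 0}

/-- Euclidean norm `|k|` of a frequency `k ∈ ℤ^d \ {0}`. -/
noncomputable def nrm {d : ℕ} (k : K d) : ℝ := Real.sqrt (∑ i : Fin d, ((k.1 i : ℝ)) ^ 2)

/-- Squared fractional Sobolev seminorm `|u|_s² = Σ_k |k|^{2s} |u_k|²`. -/
noncomputable def HnormSq {d : ℕ} (s : ℝ) (u : K d → ℂ) : ℝ :=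
  ∑' k : K d, nrm k ^ (2 * s) * ‖u k‖ ^ 2

/-- `u ∈ ℓ²`, i.e. `‖u‖ = |u|_0 < ∞`. -/
def MemL2 {d : ℕ} (u : K d → ℂ) : Prop := Summable fun k : K d => ‖u k‖ ^ 2

/-- `|u|_s < ∞`. -/
def MemHs {d : ℕ} (s : ℝ) (u : K d → ℂ) : Prop :=
  Summable fun k : K d => nrm k ^ (2 * s) * ‖u k‖ ^ 2

/-!
Both functionals are diagonal in the frequency `k`, so they are minimized frequency by
frequency. With `a = |k|^{2s₁}` and `b = β |k|^{2s₂}`, completing the square in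
`a/2 |x|² + α/2 |x + y - g_k|² + b/2 |y|²` gives the minimizer
`u_k = (α b / D) g_k`, `v_k = (α a / D) g_k`, `D = (a + α) b + α a`.
Both multipliers lie in `[0, 1]` and tend to `α / (a + α)` and `0` as `β → ∞`, so
`|u_n k|, |v_n k| ≤ |g_k|` and dominated convergence gives weak convergence of the whole
sequence to `(u₀, 0)`, where `u₀ = α / (|k|^{2s₁} + α) g` (a Tikhonov filter of `g`) minimizes
`E` by the same completion of squares.
-/

open Topology Function

def pairEnergy (a b c : ℝ) (G x y : ℂ) : ℝ :=
  a / 2 * ‖x‖ ^ 2 + c / 2 * ‖x + y - G‖ ^ 2 + b / 2 * ‖y‖ ^ 2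

def singleEnergy (a c : ℝ) (G x : ℂ) : ℝ :=
  a / 2 * ‖x‖ ^ 2 + c / 2 * ‖x - G‖ ^ 2

def pairCoefU (a b c : ℝ) : ℝ := c * b / ((a + c) * b + c * a)

def pairCoefV (a b c : ℝ) : ℝ := c * a / ((a + c) * b + c * a)

section Pointwise

variable {a b c : ℝ}

lemma pairEnergy_eq_add (hD : (a + c) * b + c * a ≠ 0) (G x y : ℂ) :
    pairEnergy a b c G x y =
      pairEnergy a b c G (pairCoefU a b c * G) (pairCoefV a b c * G) +
        pairEnergy a b c 0 (x - pairCoefU a b c * G) (y - pairCoefV a b c * G) := by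
  simp only [pairEnergy, pairCoefU, pairCoefV, Complex.sq_norm, Complex.normSq_apply,
    Complex.add_re, Complex.add_im, Complex.sub_re, Complex.sub_im, Complex.mul_re,
    Complex.mul_im, Complex.ofReal_re, Complex.ofReal_im, Complex.zero_re, Complex.zero_im]
  generalize hD' : (a + c) * b + c * a = D at *
  field_simp
  subst hD'
  ring

lemma singleEnergy_eq_add (h : a + c ≠ 0) (G x : ℂ) :
    singleEnergy a c G x =
      singleEnergy a c G (↑(c / (a + c)) * G) + (a + c) / 2 * ‖x - ↑(c / (a + c)) * G‖ ^ 2 := by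
  simp only [singleEnergy, Complex.sq_norm, Complex.normSq_apply, Complex.sub_re,
    Complex.sub_im, Complex.mul_re, Complex.mul_im, Complex.ofReal_re, Complex.ofReal_im]
  field_simp
  ring

lemma eq_pairCoef_of_isMin (ha : 0 < a) (hb : 0 < b) (hc : 0 ≤ c) {G p q : ℂ}
    (hmin : ∀ x y, pairEnergy a b c G p q ≤ pairEnergy a b c G x y) :
    p = pairCoefU a b c * G ∧ q = pairCoefV a b c * G := by
  have hD : (a + c) * b + c * a ≠ 0 := by positivity
  have hrem := hmin (pairCoefU a b c * G) (pairCoefV a b c * G)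
  rw [pairEnergy_eq_add hD G p q] at hrem
  set ξ := p - pairCoefU a b c * G
  set η := q - pairCoefV a b c * G
  have hle : a / 2 * ‖ξ‖ ^ 2 + c / 2 * ‖ξ + η - 0‖ ^ 2 + b / 2 * ‖η‖ ^ 2 ≤ 0 := by
    unfold pairEnergy at hrem; linarith
  have hξ : ‖ξ‖ ^ 2 = 0 := by nlinarith [sq_nonneg ‖η‖, sq_nonneg ‖ξ + η - 0‖]
  have hη : ‖η‖ ^ 2 = 0 := by nlinarith [sq_nonneg ‖ξ‖, sq_nonneg ‖ξ + η - 0‖]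
  simp only [ξ, η, pow_eq_zero_iff two_ne_zero, norm_eq_zero, sub_eq_zero] at hξ hη
  exact ⟨hξ, hη⟩

lemma pairCoefU_mem_Icc (ha : 0 ≤ a) (hb : 0 < b) (hc : 0 ≤ c) : pairCoefU a b c ∈ Set.Icc 0 1 := by
  have hD : c * b ≤ (a + c) * b + c * a := by nlinarith [mul_nonneg ha hb.le, mul_nonneg hc ha]
  refine ⟨by unfold pairCoefU; positivity, div_le_one_of_le₀ hD (by positivity)⟩

lemma pairCoefV_mem_Icc (ha : 0 ≤ a) (hb : 0 < b) (hc : 0 ≤ c) : pairCoefV a b c ∈ Set.Icc 0 1 := by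
  have hD : c * a ≤ (a + c) * b + c * a := by nlinarith [mul_nonneg ha hb.le, mul_nonneg hc hb.le]
  refine ⟨by unfold pairCoefV; positivity, div_le_one_of_le₀ hD (by positivity)⟩

lemma norm_ofReal_mul_le {r : ℝ} (hr : r ∈ Set.Icc 0 1) (G : ℂ) : ‖(r : ℂ) * G‖ ≤ ‖G‖ := by
  rw [norm_mul, Complex.norm_real, Real.norm_of_nonneg hr.1]
  exact mul_le_of_le_one_left (norm_nonneg G) hr.2

lemma tendsto_pairCoefU {ι : Type*} {l : Filter ι} {b : ι → ℝ} (ha : 0 < a) (hc : 0 ≤ c)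
    (hb : Tendsto b l atTop) : Tendsto (fun n => pairCoefU a (b n) c) l (𝓝 (c / (a + c))) := by
  have hlim : Tendsto (fun n => c / ((a + c) + c * a * (b n)⁻¹)) l
      (𝓝 (c / ((a + c) + c * a * 0))) :=
    tendsto_const_nhds.div (tendsto_const_nhds.add ((tendsto_inv_atTop_zero.comp hb).const_mul _))
      (by positivity)
  rw [mul_zero, add_zero] at hlim
  refine hlim.congr' ((hb.eventually_gt_atTop 0).mono fun n hn => ?_)
  simp only [pairCoefU]
  field_simp

lemma tendsto_pairCoefV {ι : Type*} {l : Filter ι} {b : ι → ℝ} (ha : 0 < a) (hc : 0 ≤ c)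
    (hb : Tendsto b l atTop) : Tendsto (fun n => pairCoefV a (b n) c) l (𝓝 0) := by
  refine tendsto_const_nhds.div_atTop (tendsto_atTop_add_const_right _ _ ?_)
  exact hb.const_mul_atTop (by positivity)

end Pointwise

section Summation

variable {ι : Type*}

lemma summable_comp_update [DecidableEq ι] {α M : Type*} [AddCommGroup M] [TopologicalSpace M]
    [IsTopologicalAddGroup M] {F : ι → α → M} {x : ι → α}
    (hs : Summable fun j => F j (x j)) (k : ι) (p : α) :
    Summable fun j => F j (update x k p j) := by
  simpa only [apply_update F] using hs.update k (F k p)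

lemma apply_le_of_tsum_le_tsum_update₂ [DecidableEq ι] {α β : Type*} {F : ι → α → β → ℝ}
    {x : ι → α} {y : ι → β} (hs : Summable fun j => F j (x j) (y j))
    (hmin : ∀ k p q, ∑' j, F j (x j) (y j) ≤ ∑' j, F j (update x k p j) (update y k q j))
    (k : ι) (p : α) (q : β) : F k (x k) (y k) ≤ F k p q := by
  have h := hmin k p q
  simp only [apply_update₂ F, (hs.hasSum.update k (F k p q)).tsum_eq] at h
  linarith

lemma summable_norm_add_sq {E : Type*} [SeminormedAddCommGroup E] {f h : ι → E}
    (hf : Summable fun k => ‖f k‖ ^ 2) (hh : Summable fun k => ‖h k‖ ^ 2) :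
    Summable fun k => ‖f k + h k‖ ^ 2 := by
  refine .of_nonneg_of_le (fun _ => sq_nonneg _) (fun k => ?_) ((hf.add hh).mul_left 2)
  calc ‖f k + h k‖ ^ 2 ≤ (‖f k‖ + ‖h k‖) ^ 2 := by gcongr; exact norm_add_le _ _
    _ ≤ 2 * (‖f k‖ ^ 2 + ‖h k‖ ^ 2) := add_sq_le

lemma summable_norm_sub_sq {E : Type*} [SeminormedAddCommGroup E] {f h : ι → E}
    (hf : Summable fun k => ‖f k‖ ^ 2) (hh : Summable fun k => ‖h k‖ ^ 2) :
    Summable fun k => ‖f k - h k‖ ^ 2 := by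
  simpa only [sub_eq_add_neg] using
    summable_norm_add_sq hf (h := fun k => -h k) (by simpa only [norm_neg] using hh)

lemma summable_norm_mul_norm {E F : Type*} [SeminormedAddCommGroup E] [SeminormedAddCommGroup F]
    {f : ι → E} {h : ι → F} (hf : Summable fun k => ‖f k‖ ^ 2) (hh : Summable fun k => ‖h k‖ ^ 2) :
    Summable fun k => ‖f k‖ * ‖h k‖ := by
  refine .of_nonneg_of_le (fun _ => by positivity) (fun k => ?_) ((hf.add hh).mul_left (1 / 2))
  nlinarith [two_mul_le_add_sq ‖f k‖ ‖h k‖]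

lemma tendsto_tsum_conj_mul_of_norm_le {f : ℕ → ι → ℂ} {f₀ w G : ι → ℂ}
    (hw : Summable fun k => ‖w k‖ ^ 2) (hG : Summable fun k => ‖G k‖ ^ 2)
    (hlim : ∀ k, Tendsto (fun n => f n k) atTop (𝓝 (f₀ k))) (hle : ∀ n k, ‖f n k‖ ≤ ‖G k‖) :
    Tendsto (fun n => ∑' k, starRingEnd ℂ (w k) * f n k) atTop
      (𝓝 (∑' k, starRingEnd ℂ (w k) * f₀ k)) := by
  refine tendsto_tsum_of_dominated_convergence (summable_norm_mul_norm hw hG)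
    (fun k => (hlim k).const_mul _) (.of_forall fun n k => ?_)
  rw [norm_mul, Complex.norm_conj]
  exact mul_le_mul_of_nonneg_left (hle n k) (norm_nonneg _)

lemma sqrt_tsum_sq_le_of_norm_le {E F : Type*} [SeminormedAddCommGroup E]
    [SeminormedAddCommGroup F] {f : ι → E} {h : ι → F} (hh : Summable fun k => ‖h k‖ ^ 2)
    (hle : ∀ k, ‖f k‖ ≤ ‖h k‖) : √(∑' k, ‖f k‖ ^ 2) ≤ √(∑' k, ‖h k‖ ^ 2) := by
  have hsq k : ‖f k‖ ^ 2 ≤ ‖h k‖ ^ 2 := by gcongr; exact hle k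
  exact Real.sqrt_le_sqrt <|
    (hh.of_nonneg_of_le (fun _ => sq_nonneg _) hsq).tsum_le_tsum hsq hh

end Summation

section Frequencies

variable {d : ℕ}

lemma one_le_nrm (k : K d) : 1 ≤ nrm k := by
  obtain ⟨i, hi⟩ : ∃ i, k.1 i ≠ 0 := Function.ne_iff.mp k.2
  have hi' : (1 : ℝ) ≤ (k.1 i : ℝ) ^ 2 :=
    mod_cast (one_le_sq_iff_one_le_abs _).mpr (Int.one_le_abs hi)
  rw [nrm, Real.one_le_sqrt]
  exact hi'.trans (Finset.single_le_sum (fun j _ => sq_nonneg ((k.1 j : ℝ))) (Finset.mem_univ i))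

lemma nrm_rpow_pos (k : K d) (s : ℝ) : 0 < nrm k ^ s :=
  Real.rpow_pos_of_pos (zero_lt_one.trans_le (one_le_nrm k)) s

lemma memHs_of_memL2 {s : ℝ} (hs : s ≤ 0) {u : K d → ℂ} (hu : MemL2 u) : MemHs s u :=
  hu.of_nonneg_of_le (fun k => mul_nonneg (nrm_rpow_pos k _).le (sq_nonneg _)) fun k =>
    mul_le_of_le_one_left (sq_nonneg _)
      (Real.rpow_le_one_of_one_le_of_nonpos (one_le_nrm k) (by linarith))

end Frequencies

section Energies

variable {d : ℕ} {s s₁ s₂ α β : ℝ} {g : K d → ℂ}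

def decompEnergy (s₁ s₂ α β : ℝ) (g u v : K d → ℂ) : ℝ :=
  (1 / 2) * HnormSq s₁ u + (α / 2) * (∑' k : K d, ‖u k + v k - g k‖ ^ 2) +
    (β / 2) * HnormSq s₂ v

def limitEnergy (s α : ℝ) (g u : K d → ℂ) : ℝ :=
  (1 / 2) * HnormSq s u + (α / 2) * (∑' k : K d, ‖u k - g k‖ ^ 2)

def tikhonov (s α : ℝ) (g : K d → ℂ) (k : K d) : ℂ := ↑(α / (nrm k ^ (2 * s) + α)) * g k

lemma hasSum_pairEnergy (hs₂ : s₂ ≤ 0) (hg : MemL2 g) {u v : K d → ℂ} (hu : MemL2 u)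
    (hu₁ : MemHs s₁ u) (hv : MemL2 v) :
    HasSum (fun k => pairEnergy (nrm k ^ (2 * s₁)) (β * nrm k ^ (2 * s₂)) α (g k) (u k) (v k))
      (decompEnergy s₁ s₂ α β g u v) := by
  have h₁ := hu₁.hasSum.mul_left (1 / 2)
  have h₂ := (summable_norm_sub_sq (summable_norm_add_sq hu hv) hg).hasSum.mul_left (α / 2)
  have h₃ := (memHs_of_memL2 hs₂ hv).hasSum.mul_left (β / 2)
  refine ((h₁.add h₂).add h₃).congr_fun fun k => ?_
  simp only [pairEnergy]
  ring

lemma hasSum_singleEnergy (hg : MemL2 g) {u : K d → ℂ} (hu : MemL2 u) (hu₁ : MemHs s u) :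
    HasSum (fun k => singleEnergy (nrm k ^ (2 * s)) α (g k) (u k)) (limitEnergy s α g u) := by
  have h₁ := hu₁.hasSum.mul_left (1 / 2)
  have h₂ := (summable_norm_sub_sq hu hg).hasSum.mul_left (α / 2)
  refine (h₁.add h₂).congr_fun fun k => ?_
  simp only [singleEnergy]
  ring

lemma memL2_update [DecidableEq (K d)] {u : K d → ℂ} (hu : MemL2 u) (k : K d) (x : ℂ) :
    MemL2 (update u k x) :=
  summable_comp_update (F := fun _ t => ‖t‖ ^ 2) hu k x

lemma memHs_update [DecidableEq (K d)] {u : K d → ℂ} (hu : MemHs s u) (k : K d) (x : ℂ) :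
    MemHs s (update u k x) :=
  summable_comp_update (F := fun j t => nrm j ^ (2 * s) * ‖t‖ ^ 2) hu k x

lemma eq_pairCoef_of_decompEnergy_le (hs₂ : s₂ ≤ 0) (hα : 0 ≤ α) (hβ : 0 < β)
    (hg : MemL2 g) {u v : K d → ℂ} (hu : MemL2 u) (hu₁ : MemHs s₁ u) (hv : MemL2 v)
    (hmin : ∀ w z : K d → ℂ, MemL2 w → MemHs s₁ w → MemL2 z →
      decompEnergy s₁ s₂ α β g u v ≤ decompEnergy s₁ s₂ α β g w z) (k : K d) :
    u k = pairCoefU (nrm k ^ (2 * s₁)) (β * nrm k ^ (2 * s₂)) α * g k ∧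
      v k = pairCoefV (nrm k ^ (2 * s₁)) (β * nrm k ^ (2 * s₂)) α * g k := by
  classical
  refine eq_pairCoef_of_isMin (nrm_rpow_pos k _) (mul_pos hβ (nrm_rpow_pos k _)) hα
    fun x y => apply_le_of_tsum_le_tsum_update₂
      (F := fun j => pairEnergy (nrm j ^ (2 * s₁)) (β * nrm j ^ (2 * s₂)) α (g j))
      (hasSum_pairEnergy hs₂ hg hu hu₁ hv).summable (fun j p q => ?_) k x y
  rw [(hasSum_pairEnergy hs₂ hg hu hu₁ hv).tsum_eq,
    (hasSum_pairEnergy hs₂ hg (memL2_update hu j p) (memHs_update hu₁ j p)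
      (memL2_update hv j q)).tsum_eq]
  exact hmin _ _ (memL2_update hu j p) (memHs_update hu₁ j p) (memL2_update hv j q)

lemma tikhonov_coef_mem_Icc (hα : 0 ≤ α) (k : K d) :
    α / (nrm k ^ (2 * s) + α) ∈ Set.Icc 0 1 := by
  have hk := nrm_rpow_pos k (2 * s)
  exact ⟨by positivity, div_le_one_of_le₀ (le_add_of_nonneg_left hk.le) (by positivity)⟩

lemma norm_tikhonov_le (hα : 0 ≤ α) (k : K d) : ‖tikhonov s α g k‖ ≤ ‖g k‖ :=
  norm_ofReal_mul_le (tikhonov_coef_mem_Icc hα k) (g k)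

lemma memL2_tikhonov (hα : 0 ≤ α) (hg : MemL2 g) : MemL2 (tikhonov s α g) :=
  hg.of_nonneg_of_le (fun _ => sq_nonneg _) fun k => by gcongr; exact norm_tikhonov_le hα k

lemma memHs_tikhonov (hα : 0 ≤ α) (hg : MemL2 g) : MemHs s (tikhonov s α g) := by
  refine (hg.mul_left α).of_nonneg_of_le (fun k => by have := nrm_rpow_pos k (2 * s); positivity)
    fun k => ?_
  -- compare the energy of the minimizer with that of `x = 0`
  have hk := nrm_rpow_pos k (2 * s)
  have h := singleEnergy_eq_add (a := nrm k ^ (2 * s)) (c := α) (by positivity) (g k) 0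
  simp only [singleEnergy, norm_zero, zero_sub, norm_neg] at h
  change nrm k ^ (2 * s) * ‖tikhonov s α g k‖ ^ 2 ≤ α * ‖g k‖ ^ 2
  have hP := mul_nonneg (add_nonneg hk.le hα) (sq_nonneg ‖tikhonov s α g k‖)
  have hPg := mul_nonneg hα (sq_nonneg ‖tikhonov s α g k - g k‖)
  simp only [tikhonov] at hP hPg ⊢
  linarith

lemma hasSum_limitEnergy_sub (hα : 0 ≤ α) (hg : MemL2 g) {u : K d → ℂ} (hu : MemL2 u)
    (hu₁ : MemHs s u) :
    HasSum (fun k => (nrm k ^ (2 * s) + α) / 2 * ‖u k - tikhonov s α g k‖ ^ 2)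
      (limitEnergy s α g u - limitEnergy s α g (tikhonov s α g)) := by
  refine ((hasSum_singleEnergy hg hu hu₁).sub
    (hasSum_singleEnergy hg (memL2_tikhonov hα hg) (memHs_tikhonov hα hg))).congr_fun fun k => ?_
  rw [singleEnergy_eq_add (by have := nrm_rpow_pos k (2 * s); positivity) (g k) (u k)]
  simp only [tikhonov]
  ring

lemma limitEnergy_tikhonov_le (hα : 0 ≤ α) (hg : MemL2 g) {u : K d → ℂ} (hu : MemL2 u)
    (hu₁ : MemHs s u) : limitEnergy s α g (tikhonov s α g) ≤ limitEnergy s α g u := by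
  have h := (hasSum_limitEnergy_sub hα hg hu hu₁).nonneg fun k => by
    have := nrm_rpow_pos k (2 * s); positivity
  linarith

lemma eq_tikhonov_of_limitEnergy_le (hα : 0 ≤ α) (hg : MemL2 g) {u : K d → ℂ} (hu : MemL2 u)
    (hu₁ : MemHs s u) (h : limitEnergy s α g u ≤ limitEnergy s α g (tikhonov s α g)) :
    u = tikhonov s α g := by
  have hnonneg k : 0 ≤ (nrm k ^ (2 * s) + α) / 2 * ‖u k - tikhonov s α g k‖ ^ 2 := by
    have := nrm_rpow_pos k (2 * s); positivity
  have hsum := hasSum_limitEnergy_sub hα hg hu hu₁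
  rw [le_antisymm (by linarith) (hsum.nonneg hnonneg), hasSum_zero_iff_of_nonneg hnonneg] at hsum
  funext k
  have hk := congrFun hsum k
  have hpos : 0 < (nrm k ^ (2 * s) + α) / 2 := by have := nrm_rpow_pos k (2 * s); positivity
  simpa [hpos.ne', sub_eq_zero] using hk

end Energies

theorem stmt_14_general (d : ℕ) (g : K d → ℂ) (hg : MemL2 g)
    (s₁ s₂ α : ℝ) (hs₂ : s₂ ≤ 0) (hα : 0 < α)
    (βseq : ℕ → ℝ) (hβpos : ∀ n, 0 < βseq n)
    (hβtop : Tendsto βseq atTop atTop)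
    (u v : ℕ → K d → ℂ)
    (hmin : ∀ n : ℕ, MemL2 (u n) ∧ MemHs s₁ (u n) ∧ MemL2 (v n) ∧
      ∀ w z : K d → ℂ, MemL2 w → MemHs s₁ w → MemL2 z →
        (1 / 2) * HnormSq s₁ (u n) +
            (α / 2) * (∑' k : K d, ‖u n k + v n k - g k‖ ^ 2) +
            (βseq n / 2) * HnormSq s₂ (v n)
          ≤ (1 / 2) * HnormSq s₁ w +
            (α / 2) * (∑' k : K d, ‖w k + z k - g k‖ ^ 2) +
            (βseq n / 2) * HnormSq s₂ z) :
    (∃ C : ℝ, ∀ n : ℕ,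
      Real.sqrt (∑' k : K d, ‖u n k‖ ^ 2) ≤ C ∧
      Real.sqrt (∑' k : K d, ‖v n k‖ ^ 2) ≤ C) ∧
    ∃ (u₀ : K d → ℂ) (ψ : ℕ → ℕ), StrictMono ψ ∧
      (∀ w : K d → ℂ, MemL2 w →
        Tendsto (fun n : ℕ => ∑' k : K d, starRingEnd ℂ (w k) * u (ψ n) k) atTop
          (nhds (∑' k : K d, starRingEnd ℂ (w k) * u₀ k))) ∧
      (∀ w : K d → ℂ, MemL2 w →
        Tendsto (fun n : ℕ => ∑' k : K d, starRingEnd ℂ (w k) * v (ψ n) k) atTop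
          (nhds 0)) ∧
      MemL2 u₀ ∧ MemHs s₁ u₀ ∧
      (∀ w : K d → ℂ, MemL2 w → MemHs s₁ w →
        (1 / 2) * HnormSq s₁ u₀ + (α / 2) * (∑' k : K d, ‖u₀ k - g k‖ ^ 2)
          ≤ (1 / 2) * HnormSq s₁ w + (α / 2) * (∑' k : K d, ‖w k - g k‖ ^ 2)) ∧
      (∀ w : K d → ℂ, MemL2 w → MemHs s₁ w →
        (∀ z : K d → ℂ, MemL2 z → MemHs s₁ z →
          (1 / 2) * HnormSq s₁ w + (α / 2) * (∑' k : K d, ‖w k - g k‖ ^ 2)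
            ≤ (1 / 2) * HnormSq s₁ z + (α / 2) * (∑' k : K d, ‖z k - g k‖ ^ 2)) → w = u₀) := by
  have hform n k := eq_pairCoef_of_decompEnergy_le hs₂ hα.le (hβpos n) hg
    (hmin n).1 (hmin n).2.1 (hmin n).2.2.1 (hmin n).2.2.2 k
  have hβk (k : K d) : Tendsto (fun n => βseq n * nrm k ^ (2 * s₂)) atTop atTop :=
    hβtop.atTop_mul_const (nrm_rpow_pos k _)
  have hu_le n k : ‖u n k‖ ≤ ‖g k‖ := (hform n k).1 ▸ norm_ofReal_mul_le
    (pairCoefU_mem_Icc (nrm_rpow_pos k _).le (mul_pos (hβpos n) (nrm_rpow_pos k _)) hα.le) _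
  have hv_le n k : ‖v n k‖ ≤ ‖g k‖ := (hform n k).2 ▸ norm_ofReal_mul_le
    (pairCoefV_mem_Icc (nrm_rpow_pos k _).le (mul_pos (hβpos n) (nrm_rpow_pos k _)) hα.le) _
  have hu_lim k : Tendsto (fun n => u n k) atTop (𝓝 (tikhonov s₁ α g k)) :=
    ((tendsto_pairCoefU (nrm_rpow_pos k _) hα.le (hβk k)).ofReal.mul_const (g k)).congr
      fun n => (hform n k).1.symm
  have hv_lim k : Tendsto (fun n => v n k) atTop (𝓝 0) := by
    simpa using ((tendsto_pairCoefV (nrm_rpow_pos k _) hα.le (hβk k)).ofReal.mul_const (g k)).congr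
      fun n => (hform n k).2.symm
  refine ⟨⟨_, fun n => ⟨sqrt_tsum_sq_le_of_norm_le hg (hu_le n),
      sqrt_tsum_sq_le_of_norm_le hg (hv_le n)⟩⟩, tikhonov s₁ α g, id, strictMono_id,
    fun w hw => tendsto_tsum_conj_mul_of_norm_le hw hg hu_lim hu_le,
    fun w hw => by simpa using tendsto_tsum_conj_mul_of_norm_le hw hg hv_lim hv_le,
    memL2_tikhonov hα.le hg, memHs_tikhonov hα.le hg,
    fun w hw hw₁ => limitEnergy_tikhonov_le hα.le hg hw hw₁,
    fun w hw hw₁ hw_min => eq_tikhonov_of_limitEnergy_le hα.le hg hw hw₁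
      (hw_min _ (memL2_tikhonov hα.le hg) (memHs_tikhonov hα.le hg))⟩

/-- limiting behaviour as `β → ∞`. If `(u_n, v_n)` minimizes
`I_{β_n}(u,v) = ½|u|_{s₁}² + (α/2)‖u+v−g‖² + (β_n/2)|v|_{s₂}²` with `β_n ↑ ∞`, then
`(u_n, v_n)` is bounded in `ℓ² × ℓ²` and a subsequence converges weakly to `(u₀, 0)`,
where `u₀` is the unique minimizer of `E(u) = ½|u|_{s₁}² + (α/2)‖u−g‖²`. -/
theorem stmt_14 (d : ℕ) (hd : 1 ≤ d) (g : K d → ℂ) (hg : MemL2 g)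
    (s₁ s₂ α : ℝ) (hs₁ : 0 ≤ s₁) (hs₂ : s₂ ≤ 0) (hα : 0 < α)
    (βseq : ℕ → ℝ) (hβpos : ∀ n, 0 < βseq n) (hβmono : StrictMono βseq)
    (hβtop : Tendsto βseq atTop atTop)
    (u v : ℕ → K d → ℂ)
    (hmin : ∀ n : ℕ, MemL2 (u n) ∧ MemHs s₁ (u n) ∧ MemL2 (v n) ∧
      ∀ w z : K d → ℂ, MemL2 w → MemHs s₁ w → MemL2 z →
        (1 / 2) * HnormSq s₁ (u n) +
            (α / 2) * (∑' k : K d, ‖u n k + v n k - g k‖ ^ 2) +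
            (βseq n / 2) * HnormSq s₂ (v n)
          ≤ (1 / 2) * HnormSq s₁ w +
            (α / 2) * (∑' k : K d, ‖w k + z k - g k‖ ^ 2) +
            (βseq n / 2) * HnormSq s₂ z) :
    (∃ C : ℝ, ∀ n : ℕ,
      Real.sqrt (∑' k : K d, ‖u n k‖ ^ 2) ≤ C ∧
      Real.sqrt (∑' k : K d, ‖v n k‖ ^ 2) ≤ C) ∧
    ∃ (u₀ : K d → ℂ) (ψ : ℕ → ℕ), StrictMono ψ ∧
      (∀ w : K d → ℂ, MemL2 w →
        Tendsto (fun n : ℕ => ∑' k : K d, starRingEnd ℂ (w k) * u (ψ n) k) atTop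
          (nhds (∑' k : K d, starRingEnd ℂ (w k) * u₀ k))) ∧
      (∀ w : K d → ℂ, MemL2 w →
        Tendsto (fun n : ℕ => ∑' k : K d, starRingEnd ℂ (w k) * v (ψ n) k) atTop
          (nhds 0)) ∧
      MemL2 u₀ ∧ MemHs s₁ u₀ ∧
      (∀ w : K d → ℂ, MemL2 w → MemHs s₁ w →
        (1 / 2) * HnormSq s₁ u₀ + (α / 2) * (∑' k : K d, ‖u₀ k - g k‖ ^ 2)
          ≤ (1 / 2) * HnormSq s₁ w + (α / 2) * (∑' k : K d, ‖w k - g k‖ ^ 2)) ∧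
      (∀ w : K d → ℂ, MemL2 w → MemHs s₁ w →
        (∀ z : K d → ℂ, MemL2 z → MemHs s₁ z →
          (1 / 2) * HnormSq s₁ w + (α / 2) * (∑' k : K d, ‖w k - g k‖ ^ 2)
            ≤ (1 / 2) * HnormSq s₁ z + (α / 2) * (∑' k : K d, ‖z k - g k‖ ^ 2)) → w = u₀) :=
  stmt_14_general d g hg s₁ s₂ α hs₂ hα βseq hβpos hβtop u v hmin
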